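/- arXiv:2511.09931 — 3 statements merged into one kernel-verified Lean document; each statement's English description precedes it below -/
import Mathlib

section
/- The map u₂ : ℝ^(2n) → ℝ^(2n + n(2n+1)) defined by y ↦ (y, (y_i y_j)_{1 ≤ i ≤ j ≤ 2n}) is a free map; that is, at every point its first-order partial derivatives together with its second-order partial derivatives are linearly independent vectors in ℝ^(2n + n(2n+1)). -/
open scoped BigOperators

/-- First-order partial derivative of a map `f : ℝⁿ → E` in direction `i`. -/
noncomputable def pderiv1 {n : ℕ} {E : Type*} [NormedAddCommGroup E] [NormedSpace ℝ E]
    (f : (Fin n → ℝ) → E) (i : Fin n) (x : Fin n → ℝ) : E :=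
  fderiv ℝ f x (Pi.single i 1)

/-- Second-order partial derivative `∂_i ∂_j f`. -/
noncomputable def pderiv2 {n : ℕ} {E : Type*} [NormedAddCommGroup E] [NormedSpace ℝ E]
    (f : (Fin n → ℝ) → E) (i j : Fin n) (x : Fin n → ℝ) : E :=
  pderiv1 (pderiv1 f j) i x

/-- A smooth map `f : ℝⁿ → E` is free if at every point its first-order partial
derivatives together with its second-order partial derivatives (indices `i ≤ j`)
are linearly independent. -/
def IsFreeMap {n : ℕ} {E : Type*} [NormedAddCommGroup E] [NormedSpace ℝ E]
    (f : (Fin n → ℝ) → E) : Prop :=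
  ContDiff ℝ (⊤ : ℕ∞) f ∧ ∀ x : Fin n → ℝ,
    LinearIndependent ℝ
      (Sum.elim (fun i : Fin n => pderiv1 f i x)
        (fun p : {p : Fin n × Fin n // p.1 ≤ p.2} => pderiv2 f p.1.1 p.1.2 x))

section Aux

variable (m : ℕ)

private def uu : (Fin m → ℝ) → (Fin m ⊕ {p : Fin m × Fin m // p.1 ≤ p.2} → ℝ) :=
  fun y => Sum.elim (fun i : Fin m => y i)
    (fun p : {p : Fin m × Fin m // p.1 ≤ p.2} => y p.1.1 * y p.1.2)

variable {m}

open ContinuousLinearMap in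
private lemma hasFDerivAt_uu (x : Fin m → ℝ) :
    HasFDerivAt (uu m)
      (ContinuousLinearMap.pi (Sum.elim (fun i : Fin m => (proj i : (Fin m → ℝ) →L[ℝ] ℝ))
        (fun p : {p : Fin m × Fin m // p.1 ≤ p.2} =>
          x p.1.1 • proj p.1.2 + x p.1.2 • proj p.1.1))) x := by
  apply hasFDerivAt_pi.2
  rintro (i | p)
  · exact hasFDerivAt_apply i x
  · exact (hasFDerivAt_apply p.1.1 x).mul (hasFDerivAt_apply p.1.2 x)

private lemma pderiv1_uu (i : Fin m) (x : Fin m → ℝ) :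
    pderiv1 (uu m) i x = Sum.elim (fun k : Fin m => (Pi.single i 1 : Fin m → ℝ) k)
      (fun p : {p : Fin m × Fin m // p.1 ≤ p.2} =>
        x p.1.1 * (Pi.single i 1 : Fin m → ℝ) p.1.2 + x p.1.2 * (Pi.single i 1 : Fin m → ℝ) p.1.1) := by
  unfold pderiv1
  rw [(hasFDerivAt_uu x).fderiv]
  funext k
  rcases k with k | p <;> simp

private lemma pderiv2_uu (i j : Fin m) (x : Fin m → ℝ) :
    pderiv2 (uu m) i j x = Sum.elim (fun _ : Fin m => (0 : ℝ))
      (fun p : {p : Fin m × Fin m // p.1 ≤ p.2} =>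
        (Pi.single j 1 : Fin m → ℝ) p.1.1 * (Pi.single i 1 : Fin m → ℝ) p.1.2
          + (Pi.single j 1 : Fin m → ℝ) p.1.2 * (Pi.single i 1 : Fin m → ℝ) p.1.1) := by
  unfold pderiv2
  have hg : pderiv1 (uu m) j = fun x => Sum.elim (fun k : Fin m => (Pi.single j 1 : Fin m → ℝ) k)
      (fun p : {p : Fin m × Fin m // p.1 ≤ p.2} =>
        x p.1.1 * (Pi.single j 1 : Fin m → ℝ) p.1.2 + x p.1.2 * (Pi.single j 1 : Fin m → ℝ) p.1.1) :=
    funext fun x => pderiv1_uu j x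
  rw [hg]
  unfold pderiv1
  open ContinuousLinearMap in
  have hD : HasFDerivAt (fun x : Fin m → ℝ => (fun k : Fin m ⊕ {p : Fin m × Fin m // p.1 ≤ p.2} =>
      Sum.elim (fun k : Fin m => (Pi.single j 1 : Fin m → ℝ) k)
      (fun p : {p : Fin m × Fin m // p.1 ≤ p.2} =>
        x p.1.1 * (Pi.single j 1 : Fin m → ℝ) p.1.2 + x p.1.2 * (Pi.single j 1 : Fin m → ℝ) p.1.1) k))
      (ContinuousLinearMap.pi (Sum.elim (fun _ : Fin m => (0 : (Fin m → ℝ) →L[ℝ] ℝ))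
        (fun p : {p : Fin m × Fin m // p.1 ≤ p.2} =>
          (Pi.single j 1 : Fin m → ℝ) p.1.2 • proj p.1.1 + (Pi.single j 1 : Fin m → ℝ) p.1.1 • proj p.1.2))) x := by
    apply hasFDerivAt_pi.2
    rintro (k | p)
    · exact hasFDerivAt_const _ _
    · exact ((hasFDerivAt_apply p.1.1 x).mul_const _).add ((hasFDerivAt_apply p.1.2 x).mul_const _)
  rw [hD.fderiv]
  funext k
  rcases k with k | p
  · simp
  · simp; ring

end Aux

private lemma uu_isFreeMap (m : ℕ) : IsFreeMap (uu m) := by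
  constructor
  · apply contDiff_pi.2
    rintro (k | p)
    · exact (ContinuousLinearMap.proj k : (Fin m → ℝ) →L[ℝ] ℝ).contDiff
    · exact ((ContinuousLinearMap.proj p.1.1 : (Fin m → ℝ) →L[ℝ] ℝ).contDiff).mul
        (ContinuousLinearMap.proj p.1.2 : (Fin m → ℝ) →L[ℝ] ℝ).contDiff
  · intro x
    rw [Fintype.linearIndependent_iff]
    intro g hg
    simp only [Sum.elim_inl, Sum.elim_inr, pderiv1_uu, pderiv2_uu] at hg
    have h1 : ∀ k : Fin m, g (Sum.inl k) = 0 := by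
      intro k
      have h := congrFun hg (Sum.inl k)
      simp [Fintype.sum_sum_type, Pi.single_apply] at h
      simpa using h
    have h2 : ∀ q : {p : Fin m × Fin m // p.1 ≤ p.2}, g (Sum.inr q) = 0 := by
      intro q
      have h := congrFun hg (Sum.inr q)
      simp [Fintype.sum_sum_type, h1] at h
      have hz : ∀ p : {p : Fin m × Fin m // p.1 ≤ p.2}, p ∈ Finset.univ → p ≠ q →
          g (Sum.inr p) *
            ((Pi.single p.1.2 1 : Fin m → ℝ) q.1.1 * (Pi.single p.1.1 1 : Fin m → ℝ) q.1.2
              + (Pi.single p.1.2 1 : Fin m → ℝ) q.1.2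
                * (Pi.single p.1.1 1 : Fin m → ℝ) q.1.1) = 0 := by
        intro p _ hpq
        have hne1 : ¬(q.1.1 = p.1.1 ∧ q.1.2 = p.1.2) := by
          rintro ⟨h1', h2'⟩
          exact hpq (Subtype.ext (Prod.ext h1'.symm h2'.symm))
        have hne2 : ¬(q.1.1 = p.1.2 ∧ q.1.2 = p.1.1) := by
          rintro ⟨h1', h2'⟩
          have hpp : p.1.1 = p.1.2 := le_antisymm p.2 (h2' ▸ h1' ▸ q.2)
          exact hpq (Subtype.ext (Prod.ext (hpp.trans h1'.symm) (hpp.symm.trans h2'.symm)))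
        rcases not_and_or.1 hne1 with hc | hc <;> rcases not_and_or.1 hne2 with hd | hd <;>
          simp [Pi.single_apply, hc, hd]
      rw [Finset.sum_eq_single_of_mem q (Finset.mem_univ q) hz] at h
      rcases eq_or_ne q.1.1 q.1.2 with he | he
      · simp [Pi.single_apply, he] at h
        linarith [h]
      · simp [Pi.single_apply, he, Ne.symm he] at h
        exact h
    rintro (k | q)
    exacts [h1 k, h2 q]

/-- The map `u₂ : ℝ^(2n) → ℝ^(2n) × ℝ^(n(2n+1))`, `y ↦ (y, (yᵢyⱼ)_{i ≤ j})`, is free. -/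
theorem u2_isFreeMap (n : ℕ) :
    IsFreeMap (fun y : Fin (2 * n) → ℝ =>
      (Sum.elim (fun i : Fin (2 * n) => y i)
        (fun p : {p : Fin (2 * n) × Fin (2 * n) // p.1 ≤ p.2} => y p.1.1 * y p.1.2) :
        Fin (2 * n) ⊕ {p : Fin (2 * n) × Fin (2 * n) // p.1 ≤ p.2} → ℝ)) :=
  uu_isFreeMap (2 * n)
end

section
/- Let g : B → ℝ^D be continuous on a neighborhood B of 0 in ℝ^n, and let F be a family of continuous maps B → ℝ^D such that every point z in some neighborhood W of g(0) can be written as z = α₁f₁(0) + ... + α_k f_k(0) with f_i ∈ F and α_i > 0. Then there exist an open neighborhood B′ ⊆ B of 0, finitely many positive continuous functions a₁,...,a_ℓ on B′, and f₁,...,f_ℓ ∈ F with g(x) = a₁(x)f₁(x) + ... + a_ℓ(x)f_ℓ(x) for all x ∈ B′. -/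
/-!
Pick points `g 0` and `g 0 ± ε eⱼ` of `W`: `g 0` is their barycenter and they span `ℝ^D`.
Expanding each of them into its positive representation gives `f₁, …, f_ℓ ∈ F` and `a⁰ > 0`
with `g 0 = ∑ a⁰ᵢ fᵢ 0`, where the `fᵢ 0` span `ℝ^D`. Let `V x` be the matrix with rows `fᵢ x`.
Its Gram matrix `(V 0)ᵀ V 0` is invertible, hence so is `(V x)ᵀ V x` near `0`, and
`R x = ((V x)ᵀ V x)⁻¹ (V x)ᵀ` is a continuous left inverse of `V x` there. Then
`a x = a⁰ + (g x - a⁰ V x) R x` is continuous, solves `a x V x = g x`, and equals `a⁰` at `0`,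
so it stays positive near `0`.
-/

open Set Filter Topology Submodule Matrix

theorem Matrix.isUnit_transpose_mul_self_of_span_row_eq_top {R m n : Type*} [Field R]
    [LinearOrder R] [IsStrictOrderedRing R] [Fintype m] [Fintype n] [DecidableEq n]
    {A : Matrix m n R} (h : span R (range A.row) = ⊤) : IsUnit (Aᵀ * A) := by
  rw [← mulVec_surjective_iff_isUnit, ← Matrix.coe_mulVecLin, ← LinearMap.range_eq_top]
  apply Submodule.eq_top_of_finrank_eq
  rw [← Matrix.rank, rank_transpose_mul_self, rank_eq_finrank_span_row, h, finrank_top]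

section
variable {X ι m : Type*} [TopologicalSpace X] [Fintype ι] [Fintype m] [DecidableEq m]

theorem exists_isOpen_continuousOn_leftInverse {V : X → Matrix ι m ℝ} {U : Set X} {x₀ : X}
    (hU : IsOpen U) (hx₀ : x₀ ∈ U) (hV : ContinuousOn V U)
    (hspan : span ℝ (range (V x₀).row) = ⊤) :
    ∃ S ⊆ U, IsOpen S ∧ x₀ ∈ S ∧
      ∃ R : X → Matrix m ι ℝ, ContinuousOn R S ∧ ∀ x ∈ S, R x * V x = 1 := by
  set G : X → Matrix m m ℝ := fun x => (V x)ᵀ * V x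
  have hG : ContinuousOn G U :=
    (continuous_fst.matrix_transpose.matrix_mul continuous_snd).comp_continuousOn (hV.prodMk hV)
  have hG₀ : IsUnit (G x₀).det :=
    (isUnit_iff_isUnit_det _).1 (isUnit_transpose_mul_self_of_span_row_eq_top hspan)
  set S := U ∩ (fun x => (G x).det) ⁻¹' {0}ᶜ
  have hGinv : ContinuousOn (fun x => (G x)⁻¹) S := fun x hx =>
    (continuousAt_matrix_inv _ <| by
      simpa only [Ring.inverse_eq_inv'] using continuousAt_inv₀ hx.2).comp_continuousWithinAt
      ((hG x hx.1).mono inter_subset_left)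
  refine ⟨S, inter_subset_left,
    (continuous_id.matrix_det.comp_continuousOn hG).isOpen_inter_preimage hU isOpen_compl_singleton,
    ⟨hx₀, hG₀.ne_zero⟩,
    fun x => (G x)⁻¹ * (V x)ᵀ,
    (continuous_fst.matrix_mul continuous_snd.matrix_transpose).comp_continuousOn
      (hGinv.prodMk (hV.mono inter_subset_left)), fun x hx => ?_⟩
  rw [Matrix.mul_assoc, nonsing_inv_mul _ (isUnit_iff_ne_zero.2 hx.2)]

theorem exists_isOpen_pos_continuousOn_vecMul_eq {V : X → Matrix ι m ℝ} {g : X → m → ℝ}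
    {U : Set X} {x₀ : X} {a₀ : ι → ℝ} (hU : IsOpen U) (hx₀ : x₀ ∈ U) (hV : ContinuousOn V U)
    (hg : ContinuousOn g U) (hspan : span ℝ (range (V x₀).row) = ⊤) (ha₀ : ∀ t, 0 < a₀ t)
    (hga₀ : a₀ ᵥ* V x₀ = g x₀) :
    ∃ U' ⊆ U, IsOpen U' ∧ x₀ ∈ U' ∧ ∃ a : X → ι → ℝ, ContinuousOn a U' ∧
      ∀ x ∈ U', (∀ t, 0 < a x t) ∧ a x ᵥ* V x = g x := by
  obtain ⟨S, hSU, hS, hx₀S, R, hR, hRV⟩ := exists_isOpen_continuousOn_leftInverse hU hx₀ hV hspan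
  set a : X → ι → ℝ := fun x => a₀ + (g x - a₀ ᵥ* V x) ᵥ* R x
  have ha : ContinuousOn a S := continuousOn_const.add <|
    (continuous_fst.matrix_vecMul continuous_snd).comp_continuousOn
      (((hg.mono hSU).sub ((continuous_const.matrix_vecMul continuous_id).comp_continuousOn
        (hV.mono hSU))).prodMk hR)
  refine ⟨S ∩ a ⁻¹' univ.pi fun _ => Ioi 0, inter_subset_left.trans hSU,
    ha.isOpen_inter_preimage hS (isOpen_set_pi finite_univ fun _ _ => isOpen_Ioi),
    ⟨hx₀S, ?_⟩, a, ha.mono inter_subset_left, fun x hx => ⟨fun t => hx.2 t (mem_univ t), ?_⟩⟩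
  · simpa [a, hga₀] using ha₀
  · rw [add_vecMul, vecMul_vecMul, hRV x hx.1, vecMul_one, add_sub_cancel]

end

section
variable {E : Type*} [AddCommGroup E] [Module ℝ E] [TopologicalSpace E] [ContinuousAdd E]
  [ContinuousSMul ℝ E] [FiniteDimensional ℝ E]

theorem exists_spanning_pos_combination_of_mem_nhds {z₀ : E} {W : Set E} (hW : W ∈ 𝓝 z₀) :
    ∃ (ℓ : ℕ) (p : Fin ℓ → E) (c : Fin ℓ → ℝ), (∀ i, p i ∈ W) ∧ (∀ i, 0 < c i) ∧
      ∑ i, c i • p i = z₀ ∧ span ℝ (range p) = ⊤ := by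
  set b := Module.finBasis ℝ E
  set κ := Option (Fin (Module.finrank ℝ E) ⊕ Fin (Module.finrank ℝ E))
  -- `none ↦ 0` keeps the family nonempty, so its barycenter is defined even when `E = 0`.
  let v : κ → E := fun k => k.elim 0 (Sum.elim b (-b))
  have hv : ∑ k, v k = 0 := by
    rw [Fintype.sum_option, Fintype.sum_sum_type]
    simp [v]
  have hnear : ∀ᶠ ε in 𝓝[≠] (0 : ℝ), ∀ k, z₀ + ε • v k ∈ W :=
    eventually_all.2 fun k => nhdsWithin_le_nhds <|
      ((continuous_const.add (continuous_id.smul continuous_const)).tendsto' 0 z₀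
        (by simp)).eventually_mem hW
  obtain ⟨ε, hεW, hε⟩ := (hnear.and self_mem_nhdsWithin).exists
  set e := (Fintype.equivFin κ).symm
  have hcard : (Fintype.card κ : ℝ) ≠ 0 := Nat.cast_ne_zero.2 Fintype.card_ne_zero
  set p : κ → E := fun k => z₀ + ε • v k
  refine ⟨Fintype.card κ, p ∘ e, fun _ => (Fintype.card κ : ℝ)⁻¹,
    fun i => hεW _, fun _ => by positivity, ?_, ?_⟩
  · have hp : ∑ k, p k = (Fintype.card κ : ℝ) • z₀ := by
      simp [p, Finset.sum_add_distrib, ← Finset.smul_sum, hv, Nat.cast_smul_eq_nsmul]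
    rw [← Finset.smul_sum, show ∑ i, (p ∘ e) i = ∑ k, p k from e.sum_comp p, hp, smul_smul,
      inv_mul_cancel₀ hcard, one_smul]
  · rw [e.surjective.range_comp, eq_top_iff, ← b.span_eq, span_le]
    rintro _ ⟨j, rfl⟩
    have hbj : b j = ε⁻¹ • (p (some (.inl j)) - p none) := by
      simp [p, v, smul_smul, inv_mul_cancel₀ hε]
    rw [hbj]
    exact smul_mem _ _ (sub_mem (subset_span ⟨_, rfl⟩) (subset_span ⟨_, rfl⟩))

theorem exists_spanning_pos_combination_of_forall_mem_nhds {G : Type*} {Φ : Set G} {ev : G → E}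
    {z₀ : E} {W : Set E} (hW : W ∈ 𝓝 z₀)
    (hcone : ∀ z ∈ W, ∃ (k : ℕ) (f : Fin k → G) (α : Fin k → ℝ),
      (∀ i, f i ∈ Φ) ∧ (∀ i, 0 < α i) ∧ z = ∑ i, α i • ev (f i)) :
    ∃ (ℓ : ℕ) (f : Fin ℓ → G) (a : Fin ℓ → ℝ), (∀ i, f i ∈ Φ) ∧ (∀ i, 0 < a i) ∧
      z₀ = ∑ i, a i • ev (f i) ∧ span ℝ (range fun i => ev (f i)) = ⊤ := by
  obtain ⟨ℓ, p, c, hpW, hc, hsum, hspan⟩ := exists_spanning_pos_combination_of_mem_nhds hW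
  choose K f α hfΦ hα hp using fun i => hcone (p i) (hpW i)
  set e := (Fintype.equivFin (Σ i, Fin (K i))).symm
  refine ⟨_, fun j => f (e j).1 (e j).2, fun j => c (e j).1 * α (e j).1 (e j).2,
    fun j => hfΦ _ _, fun j => mul_pos (hc _) (hα _ _), ?_, ?_⟩
  · rw [e.sum_comp (fun t => (c t.1 * α t.1 t.2) • ev (f t.1 t.2)), Fintype.sum_sigma, ← hsum]
    refine Finset.sum_congr rfl fun i _ => ?_
    simp only [hp i, Finset.smul_sum, smul_smul]
  · rw [eq_top_iff, ← hspan, span_le]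
    rintro _ ⟨i, rfl⟩
    rw [hp i]
    exact sum_mem fun k _ => smul_mem _ _ (subset_span
      ⟨e.symm ⟨i, k⟩, congrArg (fun t => ev (f t.1 t.2)) (e.apply_symm_apply _)⟩)

end

/-- Günther's Lemma 2.3: if every point in a neighborhood of `g 0` is a positive
combination of values at `0` of maps from the family `F`, then on a small neighborhood
of `0` the map `g` itself is a positive combination, with positive continuous
coefficient functions, of finitely many maps from `F`. -/
theorem gunther_positive_cone_lemma {n D : ℕ}
    (B : Set (Fin n → ℝ)) (hB : B ∈ nhds (0 : Fin n → ℝ))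
    (g : (Fin n → ℝ) → (Fin D → ℝ)) (hg : ContinuousOn g B)
    (F : Set ((Fin n → ℝ) → (Fin D → ℝ)))
    (hF : ∀ f ∈ F, ContinuousOn f B)
    (hcone : ∃ W ∈ nhds (g 0), ∀ z ∈ W,
      ∃ (k : ℕ) (f : Fin k → ((Fin n → ℝ) → (Fin D → ℝ))) (α : Fin k → ℝ),
        (∀ i, f i ∈ F) ∧ (∀ i, 0 < α i) ∧ z = ∑ i, α i • f i 0) :
    ∃ B' : Set (Fin n → ℝ), IsOpen B' ∧ (0 : Fin n → ℝ) ∈ B' ∧ B' ⊆ B ∧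
      ∃ (ℓ : ℕ) (a : Fin ℓ → ((Fin n → ℝ) → ℝ)) (f : Fin ℓ → ((Fin n → ℝ) → (Fin D → ℝ))),
        (∀ i, f i ∈ F) ∧ (∀ i, ContinuousOn (a i) B') ∧
        (∀ i, ∀ x ∈ B', 0 < a i x) ∧
        ∀ x ∈ B', g x = ∑ i, a i x • f i x := by
  obtain ⟨W, hW, hrep⟩ := hcone
  obtain ⟨ℓ, f, a₀, hfF, ha₀, hga₀, hspan⟩ :=
    exists_spanning_pos_combination_of_forall_mem_nhds
      (ev := fun f : (Fin n → ℝ) → (Fin D → ℝ) => f 0) hW hrep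
  have hV : ContinuousOn (fun x => Matrix.of fun i => f i x) (interior B) :=
    continuousOn_pi.2 fun i => (hF _ (hfF i)).mono interior_subset
  obtain ⟨B', hB'B, hB', h0, a, ha, hsol⟩ :=
    exists_isOpen_pos_continuousOn_vecMul_eq isOpen_interior (mem_interior_iff_mem_nhds.2 hB) hV
      (hg.mono interior_subset) hspan ha₀ (by rw [vecMul_eq_sum]; exact hga₀.symm)
  refine ⟨B', hB', h0, hB'B.trans interior_subset, ℓ, fun i x => a x i, f, hfF,
    fun i => continuousOn_pi.1 ha i, fun i x hx => (hsol x hx).1 i, fun x hx => ?_⟩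
  rw [← (hsol x hx).2, vecMul_eq_sum]
  rfl
end

section
/- Every smooth Riemannian metric g on ℝ^n can locally be written as a finite sum g = Σ_{k=1}^ℓ a_k⁴ df_k ⊗ df_k near any point p, where the a_k are smooth positive functions defined near p and the f_k are linear functions on ℝ^n. -/
open Metric
open scoped BigOperators

open Matrix

open Finset

private noncomputable def gVec {n : ℕ} (t : Fin n ⊕ Fin n × Fin n × Bool) : Fin n → ℝ :=
  match t with
  | .inl i => fun r => if r = i then 1 else 0
  | .inr (i, j, b) =>
      if i = j then 0
      else fun r => (if r = i then 1 else 0) + (if b then (1:ℝ) else -1) * (if r = j then 1 else 0)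

private noncomputable def gCoef {n : ℕ} (M : ℝ) (h : Fin n → Fin n → ℝ)
    (t : Fin n ⊕ Fin n × Fin n × Bool) : ℝ :=
  match t with
  | .inl i => h i i - ((n : ℝ) - 1) * M
  | .inr (i, j, b) => if i = j then 1 else (M + (if b then (1:ℝ) else -1) * h i j) / 4

private lemma dsum_right {n : ℕ} (r : Fin n) (f : Fin n → ℝ) :
    ∑ i : Fin n, (if r = i then (1:ℝ) else 0) * f i = f r := by
  simp [ite_mul, Finset.sum_ite_eq]

private lemma ddsum {n : ℕ} (r s : Fin n) (c : Fin n → ℝ) :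
    ∑ i : Fin n, c i * ((if r = i then (1:ℝ) else 0) * (if s = i then 1 else 0))
      = c r * (if r = s then 1 else 0) := by
  have : ∀ i : Fin n, c i * ((if r = i then (1:ℝ) else 0) * (if s = i then 1 else 0))
      = (if r = i then (1:ℝ) else 0) * (if s = i then c i else 0) := by
    intro i; by_cases h1 : r = i <;> by_cases h2 : s = i <;> simp [h1, h2]
  rw [Finset.sum_congr rfl fun i _ => this i, dsum_right]
  by_cases hrs : r = s
  · subst hrs; simp
  · rw [if_neg (fun hh => hrs hh.symm), if_neg hrs, mul_zero]

private lemma gDecomp {n : ℕ} (M : ℝ) (h : Fin n → Fin n → ℝ) (hs : ∀ i j, h i j = h j i)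
    (r s : Fin n) :
    ∑ t : Fin n ⊕ Fin n × Fin n × Bool, gCoef M h t * gVec t r * gVec t s = h r s := by
  classical
  set d : Fin n → Fin n → ℝ := fun a b => if a = b then 1 else 0 with hd
  rw [Fintype.sum_sum_type]
  have h1 : ∑ i : Fin n, gCoef M h (.inl i) * gVec (n := n) (.inl i) r * gVec (.inl i) s
      = (h r r - ((n:ℝ)-1) * M) * d r s := by
    have e : ∀ i, gCoef M h (.inl i) * gVec (n := n) (.inl i) r * gVec (.inl i) s
        = (fun i => h i i - ((n:ℝ)-1) * M) i * ((if r = i then (1:ℝ) else 0) * (if s = i then 1 else 0)) := by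
      intro i; simp only [gVec, gCoef]; ring
    rw [Finset.sum_congr rfl fun i _ => e i, ddsum]
  rw [h1]
  set F : Fin n → Fin n → ℝ := fun i j =>
    M/2 * (d r i * d s i) + M/2 * (d r j * d s j)
      + h i j / 2 * (d r i * d s j) + h i j / 2 * (d r j * d s i) with hF
  have h2 : ∀ i j : Fin n,
      (∑ b : Bool, gCoef M h (.inr (i, j, b)) * gVec (n := n) (.inr (i, j, b)) r
        * gVec (.inr (i, j, b)) s)
      = if i = j then 0 else F i j := by
    intro i j
    by_cases hij : i = j
    · simp [gCoef, gVec, hij]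
    · have hji : ¬ j = i := fun hh => hij hh.symm
      simp only [gCoef, gVec, hij, hji, if_false, Fintype.sum_bool, if_true, hF, hd]
      by_cases h1 : r = i <;> by_cases h2 : s = i <;> by_cases h3 : r = j <;>
        by_cases h4 : s = j <;> simp [h1, h2, h3, h4, hij, hji] <;> ring
  have h3 : ∑ q : Fin n × Fin n × Bool,
      gCoef M h (.inr q) * gVec (n := n) (.inr q) r * gVec (.inr q) s
      = ∑ i : Fin n, ∑ j : Fin n, (if i = j then 0 else F i j) := by
    rw [Fintype.sum_prod_type]
    refine Finset.sum_congr rfl fun i _ => ?_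
    rw [Fintype.sum_prod_type]
    exact Finset.sum_congr rfl fun j _ => h2 i j
  rw [h3]
  have h4 : ∀ i, ∑ j, (if i = j then (0:ℝ) else F i j) = (∑ j, F i j) - F i i := by
    intro i
    have e : ∀ j, (if i = j then (0:ℝ) else F i j)
        = F i j - (if i = j then F i j else 0) := by
      intro j; by_cases hij : i = j <;> simp [hij]
    rw [Finset.sum_congr rfl fun j _ => e j, Finset.sum_sub_distrib]
    congr 1
    simp [Finset.sum_ite_eq]
  have h5 : ∀ i, ∑ j, F i j
      = (n:ℝ) * (M/2 * (d r i * d s i)) + M/2 * d r s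
        + d r i * (h i s / 2) + d s i * (h i r / 2) := by
    intro i
    have e : ∀ j, F i j
        = M/2 * (d r i * d s i)
          + (fun j => (M/2 : ℝ)) j * ((if r = j then (1:ℝ) else 0) * (if s = j then 1 else 0))
          + (if s = j then (1:ℝ) else 0) * (d r i * (h i j / 2))
          + (if r = j then (1:ℝ) else 0) * (d s i * (h i j / 2)) := by
      intro j; simp only [hF, hd]; ring
    rw [Finset.sum_congr rfl fun j _ => e j]
    rw [Finset.sum_add_distrib, Finset.sum_add_distrib, Finset.sum_add_distrib,
      Finset.sum_const, ddsum, dsum_right, dsum_right]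
    simp [hd, Finset.card_univ]
  have h6 : ∀ i, F i i
      = (fun i => M + h i i) i * ((if r = i then (1:ℝ) else 0) * (if s = i then 1 else 0)) := by
    intro i; simp only [hF, hd]; ring
  have h7 : ∑ i, ((∑ j, F i j) - F i i)
      = ((n:ℝ) * M * d r s + h r s) - (M + h r r) * d r s := by
    rw [Finset.sum_sub_distrib]
    have e1 : ∑ i, (∑ j, F i j) = (n:ℝ) * M * d r s + h r s := by
      rw [Finset.sum_congr rfl fun i _ => h5 i]
      rw [Finset.sum_add_distrib, Finset.sum_add_distrib, Finset.sum_add_distrib]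
      have a1 : ∑ i : Fin n, (n:ℝ) * (M/2 * (d r i * d s i)) = (n:ℝ) * (M/2) * d r s := by
        have e : ∀ i : Fin n, (n:ℝ) * (M/2 * (d r i * d s i))
            = (fun i => ((n:ℝ) * (M/2))) i * ((if r = i then (1:ℝ) else 0) * (if s = i then 1 else 0)) := by
          intro i; simp only [hd]; ring
        rw [Finset.sum_congr rfl fun i _ => e i, ddsum]
      have a2 : ∑ _i : Fin n, M/2 * d r s = (n:ℝ) * (M/2) * d r s := by
        rw [Finset.sum_const]; simp [Fintype.card_fin]; ring
      have a3 : ∑ i : Fin n, d r i * (h i s / 2) = h r s / 2 := by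
        simp only [hd]; rw [dsum_right]
      have a4 : ∑ i : Fin n, d s i * (h i r / 2) = h r s / 2 := by
        simp only [hd]; rw [dsum_right, hs s r]
      rw [a1, a2, a3, a4]; ring
    have e2 : ∑ i, F i i = (M + h r r) * d r s := by
      rw [Finset.sum_congr rfl fun i _ => h6 i, ddsum]
    rw [e1, e2]
  rw [Finset.sum_congr rfl fun i _ => h4 i, h7]
  by_cases hrs : r = s <;> simp only [hd, hrs, if_true, if_pos rfl, hs] <;>
    first
      | ring
      | (rw [if_neg hrs]; ring)

/-- Günther's local decomposition: every smooth Riemannian metric `g` on `ℝⁿ` can, near any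
point `p`, be written as a finite sum `g = Σ_k a_k⁴ df_k ⊗ df_k` with smooth positive
functions `a_k` and linear functions `f_k(x) = Σ_i c_k(i) x_i` (so `df_k = c_k`). -/
theorem metric_locally_sum_of_rank_one {n : ℕ}
    (g : (Fin n → ℝ) → Fin n → Fin n → ℝ)
    (hsmooth : ContDiff ℝ (⊤ : ℕ∞) g)
    (hsymm : ∀ x i j, g x i j = g x j i)
    (hpos : ∀ x, (Matrix.of (g x)).PosDef) :
    ∀ p : Fin n → ℝ, ∃ ε > (0 : ℝ),
      ∃ (ℓ : ℕ) (a : Fin ℓ → (Fin n → ℝ) → ℝ) (c : Fin ℓ → Fin n → ℝ),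
        (∀ k, ContDiffOn ℝ (⊤ : ℕ∞) (a k) (ball p ε)) ∧
        (∀ k, ∀ x ∈ ball p ε, 0 < a k x) ∧
        ∀ x ∈ ball p ε, ∀ i j, g x i j = ∑ k, (a k x) ^ 4 * c k i * c k j := by
  intro p
  classical
  -- the congruence matrix normalizing g p to the identity
  open scoped MatrixOrder in
  obtain ⟨T, B, hTB, hBT, hnorm⟩ : ∃ T B : Matrix (Fin n) (Fin n) ℝ,
      T * B = 1 ∧ B * T = 1 ∧ Tᵀ * Matrix.of (g p) * T = 1 := by
    have hA : (Matrix.of (g p)).PosDef := hpos p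
    set S := CFC.sqrt (Matrix.of (g p)) with hS
    have hSS : S * S = Matrix.of (g p) := CFC.sqrt_mul_sqrt_self _ hA.posSemidef.nonneg
    have hSsym : Sᵀ = S := by
      have h1 := (CFC.sqrt_nonneg (Matrix.of (g p))).posSemidef.1
      rwa [Matrix.IsHermitian, Matrix.conjTranspose_eq_transpose_of_trivial] at h1
    have hdet : IsUnit S.det := by
      have h2 : S.det * S.det = (Matrix.of (g p)).det := by rw [← Matrix.det_mul, hSS]
      have h3 := hA.det_pos
      refine isUnit_iff_ne_zero.mpr fun h0 => ?_
      rw [h0, mul_zero] at h2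
      rw [← h2] at h3; exact lt_irrefl _ h3
    refine ⟨S⁻¹, S, Matrix.nonsing_inv_mul _ hdet, Matrix.mul_nonsing_inv _ hdet, ?_⟩
    rw [Matrix.transpose_nonsing_inv, hSsym, ← hSS]
    rw [show S⁻¹ * (S * S) * S⁻¹ = (S⁻¹ * S) * (S * S⁻¹) by
      simp only [Matrix.mul_assoc]]
    rw [Matrix.nonsing_inv_mul _ hdet, Matrix.mul_nonsing_inv _ hdet, Matrix.one_mul]
  -- the normalized metric
  set h : (Fin n → ℝ) → Fin n → Fin n → ℝ :=
    fun x r s => ∑ u, ∑ v, T u r * g x u v * T v s with hhdef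
  have hguv : ∀ u v, ContDiff ℝ (⊤ : ℕ∞) fun x => g x u v := by
    intro u v
    exact contDiff_pi.mp (contDiff_pi.mp hsmooth u) v
  have hhsmooth : ∀ r s, ContDiff ℝ (⊤ : ℕ∞) fun x => h x r s := by
    intro r s
    apply ContDiff.sum; intro u _
    apply ContDiff.sum; intro v _
    exact (contDiff_const.mul (hguv u v)).mul contDiff_const
  have hhsymm : ∀ x r s, h x r s = h x s r := by
    intro x r s
    rw [hhdef]
    simp only
    rw [Finset.sum_comm]
    refine Finset.sum_congr rfl fun v _ => Finset.sum_congr rfl fun u _ => ?_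
    rw [hsymm x u v]; ring
  have hmat : ∀ x, Matrix.of (h x) = Tᵀ * Matrix.of (g x) * T := by
    intro x
    ext r s
    simp only [Matrix.of_apply, Matrix.mul_apply, Matrix.transpose_apply]
    rw [hhdef]
    simp only
    rw [Finset.sum_comm]
    refine Finset.sum_congr rfl fun v _ => ?_
    rw [Finset.sum_mul]
  have hrec : ∀ x r s, g x r s = ∑ u, ∑ v, B u r * h x u v * B v s := by
    intro x r s
    have hG : Matrix.of (g x) = Bᵀ * Matrix.of (h x) * B := by
      rw [hmat x]
      rw [show Bᵀ * (Tᵀ * Matrix.of (g x) * T) * B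
          = (T * B)ᵀ * Matrix.of (g x) * (T * B) by
        rw [Matrix.transpose_mul]; simp only [Matrix.mul_assoc]]
      rw [hTB]; simp
    have : g x r s = (Bᵀ * Matrix.of (h x) * B) r s := by rw [← hG]; rfl
    rw [this]
    simp only [Matrix.mul_apply, Matrix.transpose_apply, Matrix.of_apply]
    rw [Finset.sum_comm]
    refine Finset.sum_congr rfl fun u _ => ?_
    rw [Finset.sum_mul]
  have hhp : ∀ r s, h p r s = if r = s then 1 else 0 := by
    intro r s
    have : Matrix.of (h p) r s = (1 : Matrix (Fin n) (Fin n) ℝ) r s := by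
      rw [hmat p, hnorm]
    rw [Matrix.one_apply] at this
    exact this
  -- the constant M and the neighborhood where coefficients are positive
  set M : ℝ := 1 / (2 * (n : ℝ)) with hM
  have hev : ∀ᶠ x in nhds p, ∀ r s : Fin n,
      |h x r s - (if r = s then 1 else 0)| < 1 / (4 * (n : ℝ)) := by
    rw [Filter.eventually_all]; intro r
    rw [Filter.eventually_all]; intro s
    have hn : (0:ℝ) < (n:ℝ) := by exact_mod_cast r.pos
    have hc : ContinuousAt (fun x => |h x r s - (if r = s then 1 else 0)|) p :=
      (((hhsmooth r s).continuous.sub continuous_const).abs).continuousAt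
    have h0 : |h p r s - (if r = s then 1 else 0)| < 1 / (4 * (n:ℝ)) := by
      rw [hhp r s]
      have hn4 : (0:ℝ) < 4 * (n:ℝ) := by linarith
      simp only [sub_self, abs_zero]
      exact div_pos one_pos hn4
    exact hc.eventually_lt continuousAt_const h0
  rw [Metric.eventually_nhds_iff_ball] at hev
  obtain ⟨ε, hε, hball⟩ := hev
  refine ⟨ε, hε, ?_⟩
  -- coefficients are positive on the ball
  have hcoefpos : ∀ x ∈ ball p ε, ∀ t : Fin n ⊕ Fin n × Fin n × Bool,
      0 < gCoef M (h x) t := by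
    rintro x hx (i | ⟨i, j, b⟩)
    · have hb := hball x hx i i
      rw [if_pos rfl] at hb
      have hn : (0:ℝ) < (n:ℝ) := by exact_mod_cast i.pos
      have habs := abs_lt.mp hb
      simp only [gCoef, hM]
      have e2 : ((n:ℝ) - 1) * (1 / (2 * (n:ℝ))) = 1/2 - 2 * (1 / (4 * (n:ℝ))) := by
        field_simp; ring
      have e3 : (0:ℝ) < 1 / (4 * (n:ℝ)) := by positivity
      rw [e2]
      linarith [habs.1]
    · simp only [gCoef]
      by_cases hij : i = j
      · rw [if_pos hij]; norm_num
      · rw [if_neg hij]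
        have hb := hball x hx i j
        rw [if_neg hij] at hb
        have hn : (0:ℝ) < (n:ℝ) := by exact_mod_cast i.pos
        have habs := abs_lt.mp (by simpa using hb)
        have e1 : 2 * (1 / (4 * (n:ℝ))) = 1 / (2 * (n:ℝ)) := by field_simp; ring
        have e3 : (0:ℝ) < 1 / (4 * (n:ℝ)) := by positivity
        cases b <;> simp only [if_true, if_false, hM] <;> norm_num <;> linarith
  -- the data
  set ι := (Fin n ⊕ Fin n × Fin n × Bool) with hι
  set e : ι ≃ Fin (Fintype.card ι) := Fintype.equivFin ι with he
  have hcoefsm : ∀ t : ι, ContDiff ℝ (⊤ : ℕ∞) fun x => gCoef M (h x) t := by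
    rintro (i | ⟨i, j, b⟩)
    · simp only [gCoef]
      exact (hhsmooth i i).sub contDiff_const
    · simp only [gCoef]
      by_cases hij : i = j
      · simp only [if_pos hij]
        exact contDiff_const
      · simp only [if_neg hij]
        exact (contDiff_const.add (contDiff_const.mul (hhsmooth i j))).div_const _
  refine ⟨Fintype.card ι,
    fun k x => (gCoef M (h x) (e.symm k)) ^ (((4:ℕ):ℝ)⁻¹),
    fun k i => ∑ u, B u i * gVec (e.symm k) u, ?_, ?_, ?_⟩
  · -- smoothness
    intro k
    have hcoef : ContDiff ℝ (⊤ : ℕ∞) fun x => gCoef M (h x) (e.symm k) := hcoefsm (e.symm k)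
    intro x hx
    exact ((hcoef.contDiffAt).rpow_const_of_ne
      (ne_of_gt (hcoefpos x hx (e.symm k)))).contDiffWithinAt
  · -- positivity
    intro k x hx
    exact Real.rpow_pos_of_pos (hcoefpos x hx (e.symm k)) _
  · -- the identity
    intro x hx i j
    have hpow : ∀ t, ((gCoef M (h x) t) ^ (((4:ℕ):ℝ)⁻¹)) ^ (4:ℕ) = gCoef M (h x) t := by
      intro t
      exact Real.rpow_inv_natCast_pow (le_of_lt (hcoefpos x hx t)) (by norm_num)
    calc g x i j = ∑ u, ∑ v, B u i * h x u v * B v j := hrec x i j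
      _ = ∑ u, ∑ v, (B u i * B v j) *
            (∑ t : ι, gCoef M (h x) t * gVec t u * gVec t v) := by
          refine Finset.sum_congr rfl fun u _ => Finset.sum_congr rfl fun v _ => ?_
          rw [gDecomp M (h x) (hhsymm x) u v]; ring
      _ = ∑ t : ι, gCoef M (h x) t *
            (∑ u, B u i * gVec t u) * (∑ v, B v j * gVec t v) := by
          have rhs_eq : ∀ t : ι, gCoef M (h x) t *
              (∑ u, B u i * gVec t u) * (∑ v, B v j * gVec t v)
              = ∑ u, ∑ v, (B u i * B v j) *
                  (gCoef M (h x) t * gVec t u * gVec t v) := by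
            intro t
            rw [mul_assoc, Finset.sum_mul_sum]
            simp only [Finset.mul_sum]
            exact Finset.sum_congr rfl fun u _ =>
              Finset.sum_congr rfl fun v _ => by ring
          calc ∑ u, ∑ v, (B u i * B v j) *
                (∑ t : ι, gCoef M (h x) t * gVec t u * gVec t v)
              = ∑ u, ∑ v, ∑ t : ι, (B u i * B v j) *
                  (gCoef M (h x) t * gVec t u * gVec t v) :=
                Finset.sum_congr rfl fun u _ => Finset.sum_congr rfl fun v _ => by
                  rw [Finset.mul_sum]
            _ = ∑ u, ∑ t : ι, ∑ v, (B u i * B v j) *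
                  (gCoef M (h x) t * gVec t u * gVec t v) :=
                Finset.sum_congr rfl fun u _ => Finset.sum_comm
            _ = ∑ t : ι, ∑ u, ∑ v, (B u i * B v j) *
                  (gCoef M (h x) t * gVec t u * gVec t v) := Finset.sum_comm
            _ = ∑ t : ι, gCoef M (h x) t *
                  (∑ u, B u i * gVec t u) * (∑ v, B v j * gVec t v) :=
                Finset.sum_congr rfl fun t _ => (rhs_eq t).symm
      _ = ∑ k, ((gCoef M (h x) (e.symm k)) ^ (((4:ℕ):ℝ)⁻¹)) ^ (4:ℕ) *
            (∑ u, B u i * gVec (e.symm k) u) * (∑ v, B v j * gVec (e.symm k) v) := by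
          rw [← Equiv.sum_comp e.symm
            (fun t => gCoef M (h x) t * (∑ u, B u i * gVec t u) * (∑ v, B v j * gVec t v))]
          exact Finset.sum_congr rfl fun k _ => by rw [hpow]
      _ = ∑ k, ((gCoef M (h x) (e.symm k)) ^ (((4:ℕ):ℝ)⁻¹)) ^ 4 *
            (fun k i => ∑ u, B u i * gVec (e.symm k) u) k i *
            (fun k i => ∑ u, B u i * gVec (e.symm k) u) k j := rfl
end
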